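/- arXiv:1209.0746 — 6 statements merged into one kernel-verified Lean document; each statement's English description precedes it below -/
import Mathlib

section
/- Let k be an algebraically closed field of characteristic zero and X, Y be n×n matrices over k satisfying XY - YX = Y². Then Y is nilpotent. -/
/-!
Commutation with `X` is a derivation and `Y ^ 2` commutes with `Y`, so
`X p(Y) - p(Y) X = p'(Y) Y ^ 2` for every polynomial `p`. Taking for `p` the minimal polynomial
`m` of `Y` gives `m ∣ T ^ 2 m'`, `T` the polynomial variable. In characteristic zero a root
`t ≠ 0` of `m` has multiplicity one less in `m'` and none in `T ^ 2`, so `0` is the only root of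
`m`; over an algebraically closed field `m` then divides a power of `T`, i.e. `Y` is nilpotent.
-/

open Polynomial

section Commutator

variable {R A : Type*} [CommRing R] [Ring A] [Algebra R A] {x y c : A}

theorem mul_pow_sub_pow_mul_of_commute (hc : x * y - y * x = c) (hyc : Commute y c) (n : ℕ) :
    x * y ^ n - y ^ n * x = n • (y ^ (n - 1) * c) := by
  induction n with
  | zero => simp
  | succ n ih =>
    have hstep : x * y ^ (n + 1) - y ^ (n + 1) * x = (x * y ^ n - y ^ n * x) * y + y ^ n * c := by
      rw [← hc]; noncomm_ring
    rw [hstep, ih]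
    rcases n with _ | n
    · simp
    · rw [Nat.add_sub_cancel, Nat.add_sub_cancel, smul_mul_assoc, mul_assoc, ← hyc.eq,
        ← mul_assoc, ← pow_succ, succ_nsmul _ (n + 1)]

theorem mul_aeval_sub_aeval_mul_of_commute (hc : x * y - y * x = c) (hyc : Commute y c)
    (p : R[X]) : x * aeval y p - aeval y p * x = aeval y (derivative p) * c := by
  induction p using Polynomial.induction_on' with
  | add p q hp hq => simp only [map_add, mul_add, add_mul, ← hp, ← hq]; abel
  | monomial n a =>
    simp only [derivative_monomial, aeval_monomial, Algebra.left_comm x, mul_assoc, ← mul_sub,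
      mul_pow_sub_pow_mul_of_commute hc hyc n, map_mul, map_natCast, nsmul_eq_mul]

end Commutator

theorem minpoly_dvd_X_sq_mul_derivative {K A : Type*} [Field K] [Ring A] [Algebra K A] {x y : A}
    (h : x * y - y * x = y ^ 2) : minpoly K y ∣ X ^ 2 * derivative (minpoly K y) := by
  refine minpoly.dvd K y ?_
  have hcomm := mul_aeval_sub_aeval_mul_of_commute (R := K) h (Commute.self_pow y 2) (minpoly K y)
  rw [minpoly.aeval, mul_zero, zero_mul, sub_zero] at hcomm
  rw [mul_comm, map_mul, map_pow, aeval_X, ← hcomm]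

theorem eq_zero_of_isRoot_of_dvd_X_sq_mul_derivative {R : Type*} [CommRing R] [IsDomain R]
    [CharZero R] {p : R[X]} (hp : p ≠ 0) (h : p ∣ X ^ 2 * derivative p) {t : R}
    (ht : p.IsRoot t) : t = 0 := by
  by_contra ht0
  have hp' : derivative p ≠ 0 := by
    rw [derivative_ne_zero]
    intro hdeg
    rw [eq_C_of_natDegree_eq_zero hdeg] at hp ht
    simp_all
  have hq : X ^ 2 * derivative p ≠ 0 := mul_ne_zero (pow_ne_zero _ X_ne_zero) hp'
  have hpos := (rootMultiplicity_pos hp).2 ht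
  have hle := rootMultiplicity_le_rootMultiplicity_of_dvd hq h t
  rw [rootMultiplicity_mul hq, derivative_rootMultiplicity_of_root ht,
    rootMultiplicity_eq_zero (p := X ^ 2) (by simpa using ht0)] at hle
  omega

theorem dvd_X_pow_natDegree_of_forall_isRoot_eq_zero {K : Type*} [Field K] [IsAlgClosed K]
    {p : K[X]} (hp : p ≠ 0) (h : ∀ t, p.IsRoot t → t = 0) : p ∣ X ^ p.natDegree := by
  rw [IsAlgClosed.dvd_iff_roots_le_roots hp (pow_ne_zero _ X_ne_zero), roots_X_pow,
    Multiset.nsmul_singleton, Multiset.eq_replicate_card.2 fun t ht => h t (isRoot_of_mem_roots ht),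
    Multiset.replicate_le_replicate]
  exact card_roots' p

theorem jordan_Y_nilpotent {k : Type*} [Field k] [IsAlgClosed k] [CharZero k] {n : ℕ}
    (X Y : Matrix (Fin n) (Fin n) k) (h : X * Y - Y * X = Y ^ 2) :
    IsNilpotent Y := by
  have hm : minpoly k Y ≠ 0 := minpoly.ne_zero (Algebra.IsIntegral.isIntegral Y)
  have hdvd := dvd_X_pow_natDegree_of_forall_isRoot_eq_zero hm fun _ =>
    eq_zero_of_isRoot_of_dvd_X_sq_mul_derivative hm (minpoly_dvd_X_sq_mul_derivative h)
  exact ⟨_, by simpa using minpoly.dvd_iff.1 hdvd⟩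
end

section
/- Let X, Y be n×n matrices over an algebraically closed field of characteristic zero, and suppose the commutator Z = XY - YX commutes with Y. Then Z is nilpotent. -/
/-!
Since `Z = XY - YX` commutes with `Y`, so does every power `Z ^ m`, and then
`tr (Z ^ (m + 1)) = tr (Z ^ m X Y) - tr (Z ^ m Y X) = 0` by cyclicity of the trace.
Over an algebraically closed field, `tr (Z ^ m) = ∑ d_μ μ ^ m` where `d_μ` is the dimension of
the generalized eigenspace of `μ`; the vanishing of these power sums for all `m ≥ 1` forces
`d_μ μ = 0` (Vandermonde), so in characteristic zero every eigenvalue of `Z` is `0`.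
-/

open Module LinearMap

theorem Finset.mul_eq_zero_of_forall_sum_mul_pow_succ_eq_zero {R : Type*} [CommRing R]
    [IsDomain R] (s : Finset R) (w : R → R) (h : ∀ m : ℕ, ∑ μ ∈ s, w μ * μ ^ (m + 1) = 0) :
    ∀ μ ∈ s, w μ * μ = 0 := by
  let e : Fin s.card ≃ s := s.equivFin.symm
  have hv := Matrix.eq_zero_of_forall_pow_sum_mul_pow_eq_zero (f := fun i ↦ (e i : R))
    (v := fun i ↦ w (e i) * e i) (Subtype.val_injective.comp e.injective) fun i ↦ ?_
  · intro μ hμ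
    simpa using congrFun hv (e.symm ⟨μ, hμ⟩)
  · rw [← h i, ← s.sum_coe_sort, ← e.sum_comp]
    simp [mul_assoc, pow_succ']

namespace Module.End

variable {K V : Type*} [Field K] [AddCommGroup V] [Module K V] [FiniteDimensional K V]

theorem trace_restrict_maxGenEigenspace_pow (f : End K V) (μ : K) (m : ℕ) :
    trace K (f.maxGenEigenspace μ)
        (f.restrict (f.mapsTo_maxGenEigenspace_of_comm (Commute.refl f) μ) ^ m) =
      finrank K (f.maxGenEigenspace μ) * μ ^ m := by
  induction m with
  | zero => simp
  | succ m ih =>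
    rw [pow_succ, mul_eq_comp, LinearMap.trace_comp_eq_mul_of_commute_of_isNilpotent μ
      ((Commute.refl _).pow_left m) (f.isNilpotent_restrict_maxGenEigenspace_sub_algebraMap μ),
      ih]
    ring

theorem finite_maxGenEigenspace_ne_bot (f : End K V) :
    {μ | f.maxGenEigenspace μ ≠ ⊥}.Finite :=
  WellFoundedGT.finite_ne_bot_of_iSupIndep f.independent_maxGenEigenspace

theorem trace_pow_eq_sum_finrank_maxGenEigenspace_mul_pow [IsAlgClosed K] (f : End K V) (m : ℕ) :
    trace K V (f ^ m) = ∑ μ ∈ f.finite_maxGenEigenspace_ne_bot.toFinset,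
      finrank K (f.maxGenEigenspace μ) * μ ^ m := by
  classical
  have hV := DirectSum.isInternal_submodule_of_iSupIndep_of_iSup_eq_top
    f.independent_maxGenEigenspace f.iSup_maxGenEigenspace_eq_top
  rw [LinearMap.trace_eq_sum_trace_restrict' hV f.finite_maxGenEigenspace_ne_bot
    fun μ ↦ f.mapsTo_maxGenEigenspace_of_comm ((Commute.refl f).pow_right m) μ]
  refine Finset.sum_congr rfl fun μ _ ↦ ?_
  rw [← trace_restrict_maxGenEigenspace_pow]
  exact congrArg _ (pow_restrict m _ _).symm

theorem isNilpotent_of_maxGenEigenspace_zero_eq_top (f : End K V)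
    (h : f.maxGenEigenspace 0 = ⊤) : IsNilpotent f := by
  refine ((LinearMap.charpoly_nilpotent_tfae f).out 2 0).mp fun v ↦ ?_
  obtain ⟨n, hn⟩ := (mem_maxGenEigenspace f 0 v).mp (h ▸ Submodule.mem_top)
  exact ⟨n, by simpa using hn⟩

theorem isNilpotent_of_forall_trace_pow_succ_eq_zero [IsAlgClosed K] [CharZero K] (f : End K V)
    (h : ∀ m : ℕ, trace K V (f ^ (m + 1)) = 0) : IsNilpotent f := by
  have heigen : ∀ μ, f.maxGenEigenspace μ ≠ ⊥ → μ = 0 := by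
    intro μ hμ
    have hdμ := Finset.mul_eq_zero_of_forall_sum_mul_pow_succ_eq_zero _
      (fun μ ↦ (finrank K (f.maxGenEigenspace μ) : K))
      (fun m ↦ by rw [← trace_pow_eq_sum_finrank_maxGenEigenspace_mul_pow, h]) μ (by simpa)
    have hd : (finrank K (f.maxGenEigenspace μ) : K) ≠ 0 :=
      Nat.cast_ne_zero.mpr (Submodule.finrank_eq_zero.not.mpr hμ)
    exact (mul_eq_zero.mp hdμ).resolve_left hd
  refine isNilpotent_of_maxGenEigenspace_zero_eq_top f ?_
  rw [eq_top_iff, ← f.iSup_maxGenEigenspace_eq_top]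
  refine iSup_le fun μ ↦ ?_
  by_cases hμ : f.maxGenEigenspace μ = ⊥
  · simp [hμ]
  · rw [heigen μ hμ]

end Module.End

namespace Matrix

theorem trace_mul_commutator_eq_zero {R n : Type*} [CommRing R] [Fintype n]
    {A X Y : Matrix n n R} (hA : Commute A Y) : (A * (X * Y - Y * X)).trace = 0 := by
  rw [mul_sub, trace_sub, ← mul_assoc, trace_mul_comm (A * X), ← mul_assoc, ← hA.eq,
    mul_assoc, sub_self]

theorem isNilpotent_of_forall_trace_pow_succ_eq_zero {K n : Type*} [Field K] [IsAlgClosed K]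
    [CharZero K] [Fintype n] [DecidableEq n] (A : Matrix n n K)
    (h : ∀ m : ℕ, (A ^ (m + 1)).trace = 0) : IsNilpotent A := by
  rw [← IsNilpotent.map_iff (toLinAlgEquiv' (R := K) (n := n)).injective]
  refine Module.End.isNilpotent_of_forall_trace_pow_succ_eq_zero _ fun m ↦ ?_
  rw [← map_pow]
  exact (trace_toLin'_eq _).trans (h m)

end Matrix

theorem commutator_commuting_with_Y_nilpotent {k : Type*} [Field k] [IsAlgClosed k] [CharZero k]
    {n : ℕ} (X Y : Matrix (Fin n) (Fin n) k)
    (h : (X * Y - Y * X) * Y = Y * (X * Y - Y * X)) :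
    IsNilpotent (X * Y - Y * X) := by
  have hZ : Commute (X * Y - Y * X) Y := h
  refine Matrix.isNilpotent_of_forall_trace_pow_succ_eq_zero _ fun m ↦ ?_
  rw [pow_succ, Matrix.trace_mul_commutator_eq_zero (hZ.pow_left m)]
end

section
/- Let A be a finite-dimensional associative algebra over an algebraically closed field k of characteristic zero, generated by elements X and Y satisfying XY - YX = Y² with Y nilpotent. If Q ∈ A is nilpotent, then Q belongs to the Jacobson radical of A. -/
/-!
The relation says `Y * X = (X - Y) * Y`, so `Y * A ⊆ A * Y` and the left ideal `I = A * Y` is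
two-sided. Pushing `Y` to the right gives `(a * Y) ^ n = c * Y ^ n`, so `I` is a nil ideal, and
`A ⧸ I` is generated by the image of `X` alone, hence commutative. For nilpotent `Q` and any `z`,
the image of `z * Q` in `A ⧸ I` is then nilpotent, so `z * Q` is nilpotent, and `1 + z * Q` is a
unit for every `z`: that is membership in the Jacobson radical.
-/

open Ideal

section Jacobson

variable {R S F : Type*} [Ring R] [Ring S] [FunLike F R S] [RingHomClass F R S]

theorem mem_jacobson_bot_of_forall_isNilpotent_mul {x : R} (h : ∀ y, IsNilpotent (y * x)) :
    x ∈ jacobson (⊥ : Ideal R) := by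
  refine mem_jacobson_iff.2 fun y => ?_
  obtain ⟨u, hu⟩ := (h y).isUnit_add_one
  refine ⟨↑u⁻¹, ?_⟩
  rw [mem_bot, mul_assoc, sub_eq_zero, ← mul_add_one, ← hu, Units.inv_mul]

theorem mem_jacobson_bot_of_isNilpotent (f : F) (hcomm : ∀ a b, Commute (f a) (f b))
    (hker : ∀ a, f a = 0 → IsNilpotent a) {x : R} (hx : IsNilpotent x) :
    x ∈ jacobson (⊥ : Ideal R) := by
  refine mem_jacobson_bot_of_forall_isNilpotent_mul fun y => ?_
  obtain ⟨n, hn⟩ := (hcomm y x).isNilpotent_mul_left (hx.map f)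
  exact (hker _ (by rw [map_pow, map_mul, hn])).of_pow

end Jacobson

section Normalizing

variable {R : Type*} [Ring R] {y : R}

theorem isTwoSided_span_singleton (h : ∀ b, ∃ c, y * b = c * y) : (span {y}).IsTwoSided := by
  refine ⟨fun b ha => ?_⟩
  obtain ⟨a, rfl⟩ := mem_span_singleton'.1 ha
  obtain ⟨c, hc⟩ := h b
  exact mem_span_singleton'.2 ⟨a * c, by rw [mul_assoc, ← hc, mul_assoc]⟩

theorem exists_pow_mul_eq_mul_pow (h : ∀ b, ∃ c, y * b = c * y) (n : ℕ) (b : R) :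
    ∃ c, y ^ n * b = c * y ^ n := by
  induction n generalizing b with
  | zero => exact ⟨b, by simp⟩
  | succ n ih =>
    obtain ⟨c, hc⟩ := h b
    obtain ⟨d, hd⟩ := ih c
    exact ⟨d, by rw [pow_succ, mul_assoc, hc, ← mul_assoc, hd, mul_assoc]⟩

theorem exists_mul_pow_eq_mul_pow (h : ∀ b, ∃ c, y * b = c * y) (a : R) (n : ℕ) :
    ∃ c, (a * y) ^ n = c * y ^ n := by
  induction n with
  | zero => exact ⟨1, by simp⟩
  | succ n ih =>
    obtain ⟨c, hc⟩ := ih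
    obtain ⟨d, hd⟩ := exists_pow_mul_eq_mul_pow h n a
    refine ⟨c * d, ?_⟩
    calc (a * y) ^ (n + 1) = c * (y ^ n * a) * y := by rw [pow_succ, hc]; simp only [mul_assoc]
      _ = c * d * y ^ (n + 1) := by rw [hd, pow_succ]; simp only [mul_assoc]

theorem isNilpotent_of_mem_span_singleton (h : ∀ b, ∃ c, y * b = c * y) (hy : IsNilpotent y)
    {x : R} (hx : x ∈ span {y}) : IsNilpotent x := by
  obtain ⟨a, rfl⟩ := mem_span_singleton'.1 hx
  obtain ⟨n, hn⟩ := hy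
  obtain ⟨c, hc⟩ := exists_mul_pow_eq_mul_pow h a n
  exact ⟨n, by rw [hc, hn, mul_zero]⟩

end Normalizing

section GeneratedByTwo

variable {k A B : Type*} [CommSemiring k] [Semiring A] [Semiring B] [Algebra k A] [Algebra k B]
  {X Y : A}

theorem AlgHom.apply_mem_adjoin_singleton_of_apply_eq_zero (f : A →ₐ[k] B)
    (hgen : Algebra.adjoin k ({X, Y} : Set A) = ⊤) (hY : f Y = 0) (a : A) :
    f a ∈ Algebra.adjoin k {f X} := by
  have ha : a ∈ Algebra.adjoin k ({X, Y} : Set A) := hgen ▸ Algebra.mem_top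
  induction ha using Algebra.adjoin_induction with
  | mem x hx =>
    rcases hx with rfl | rfl
    · exact Algebra.self_mem_adjoin_singleton k _
    · exact hY ▸ zero_mem _
  | algebraMap r => exact f.commutes r ▸ Subalgebra.algebraMap_mem _ r
  | add x y _ _ hx hy => exact map_add f x y ▸ add_mem hx hy
  | mul x y _ _ hx hy => exact map_mul f x y ▸ mul_mem hx hy

theorem AlgHom.commute_of_apply_eq_zero (f : A →ₐ[k] B)
    (hgen : Algebra.adjoin k ({X, Y} : Set A) = ⊤) (hY : f Y = 0) (a b : A) :
    Commute (f a) (f b) :=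
  have hmem := f.apply_mem_adjoin_singleton_of_apply_eq_zero hgen hY
  Algebra.commute_of_mem_adjoin_singleton_of_commute (hmem b)
    (Algebra.commute_of_mem_adjoin_self (hmem a)).symm

end GeneratedByTwo

theorem exists_mul_eq_mul_of_commutator_eq_sq {k A : Type*} [CommSemiring k] [Ring A] [Algebra k A]
    {X Y : A} (hgen : Algebra.adjoin k ({X, Y} : Set A) = ⊤) (hrel : X * Y - Y * X = Y ^ 2)
    (b : A) : ∃ c, Y * b = c * Y := by
  have hb : b ∈ Algebra.adjoin k ({X, Y} : Set A) := hgen ▸ Algebra.mem_top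
  induction hb using Algebra.adjoin_induction with
  | mem x hx =>
    rcases hx with rfl | rfl
    · exact ⟨x - Y, by rw [sub_mul, ← sq, ← hrel, sub_sub_cancel]⟩
    · exact ⟨x, rfl⟩
  | algebraMap r => exact ⟨algebraMap k A r, (Algebra.commutes r Y).symm⟩
  | add x y _ _ hx hy =>
    obtain ⟨c, hc⟩ := hx
    obtain ⟨d, hd⟩ := hy
    exact ⟨c + d, by rw [mul_add, hc, hd, add_mul]⟩
  | mul x y _ _ hx hy =>
    obtain ⟨c, hc⟩ := hx
    obtain ⟨d, hd⟩ := hy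
    exact ⟨c * d, by rw [← mul_assoc, hc, mul_assoc, hd, mul_assoc]⟩

theorem nilpotent_mem_jacobson_general {k : Type*} [Field k]
    {A : Type*} [Ring A] [Algebra k A]
    (X Y : A) (hgen : Algebra.adjoin k ({X, Y} : Set A) = ⊤)
    (hrel : X * Y - Y * X = Y ^ 2) (hY : IsNilpotent Y)
    (Q : A) (hQ : IsNilpotent Q) :
    Q ∈ Ideal.jacobson (⊥ : Ideal A) := by
  have hnormal := exists_mul_eq_mul_of_commutator_eq_sq hgen hrel
  have := isTwoSided_span_singleton hnormal
  let f := Quotient.mkₐ k (span {Y})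
  refine mem_jacobson_bot_of_isNilpotent f ?_ ?_ hQ
  · exact f.commute_of_apply_eq_zero hgen (Quotient.eq_zero_iff_mem.2 (mem_span_singleton_self Y))
  · exact fun a ha => isNilpotent_of_mem_span_singleton hnormal hY (Quotient.eq_zero_iff_mem.1 ha)

theorem nilpotent_mem_jacobson {k : Type*} [Field k] [IsAlgClosed k] [CharZero k]
    {A : Type*} [Ring A] [Algebra k A] [FiniteDimensional k A]
    (X Y : A) (hgen : Algebra.adjoin k ({X, Y} : Set A) = ⊤)
    (hrel : X * Y - Y * X = Y ^ 2) (hY : IsNilpotent Y)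
    (Q : A) (hQ : IsNilpotent Q) :
    Q ∈ Ideal.jacobson (⊥ : Ideal A) :=
  nilpotent_mem_jacobson_general X Y hgen hrel hY Q hQ
end

section
/- Every k-algebra automorphism of the Jordan plane R = k⟨x,y⟩/(xy - yx - y²) has the form x ↦ αx + p(y), y ↦ αy, for some nonzero α ∈ k and polynomial p ∈ k[y]; consequently Aut(R) is isomorphic to a semidirect product of the additive group k[y] and the multiplicative group k*. -/
/-!
The ordered monomials `y ^ a * x ^ b` form a basis: in these coordinates `R` becomes `k[t][s]`,
on which left multiplication by `y` is multiplication by `t` and left multiplication by `x` is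
`s + t ^ 2 d/dt`. Hence the `x`-degree is additive with multiplicative leading coefficients, so
the units of `R` are the nonzero scalars; and in characteristic zero
`[x ^ n, y] = n y ^ 2 x ^ (n - 1) + (lower terms)`, so `[r, y] = c y ^ 2` forces `r = c x + p(y)`.

Since `y ^ 2 = [x, y]`, every algebra map from `R` to a commutative domain kills `y`; applied to
`R → R / yR = k[x]` this puts `φ(y)` in `yR` for every endomorphism `φ`. For an automorphism,
`φ(y) = y u` and `φ⁻¹(y) = y v` give `u φ(v) = 1`, so `φ(y) = α y`, and the defining relation
becomes `[φ(x), y] = α y ^ 2`, i.e. `φ(x) = α x + p(y)`. Finally `φ ↦ α` is a surjection onto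
`kˣ`, split by the scalings, whose kernel is the group of translations `x ↦ x + p(y)`.
-/

/-- The defining relation of the Jordan plane: `x * y = y * x + y * y`. -/
inductive JordanRel (k : Type) [Field k] : FreeAlgebra k Bool → FreeAlgebra k Bool → Prop
  | rel : JordanRel k (FreeAlgebra.ι k true * FreeAlgebra.ι k false)
      (FreeAlgebra.ι k false * FreeAlgebra.ι k true + FreeAlgebra.ι k false * FreeAlgebra.ι k false)

/-- The Jordan plane `R = k⟨x,y⟩/(xy - yx - y²)`. -/
abbrev JordanPlane (k : Type) [Field k] := RingQuot (JordanRel k)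

/-- The generator `x` of the Jordan plane. -/
noncomputable def jx (k : Type) [Field k] : JordanPlane k :=
  RingQuot.mkAlgHom k (JordanRel k) (FreeAlgebra.ι k true)

/-- The generator `y` of the Jordan plane. -/
noncomputable def jy (k : Type) [Field k] : JordanPlane k :=
  RingQuot.mkAlgHom k (JordanRel k) (FreeAlgebra.ι k false)

open Polynomial

namespace JordanPlane

variable {k : Type} [Field k]

theorem lie_jx_jy : ⁅jx k, jy k⁆ = jy k * jy k := by
  have : jx k * jy k = jy k * jx k + jy k * jy k := by
    simp only [jx, jy, ← map_mul, ← map_add]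
    exact RingQuot.mkAlgHom_rel k JordanRel.rel
  rw [Ring.lie_def, this, add_sub_cancel_left]

theorem jx_mul_jy : jx k * jy k = jy k * jx k + jy k * jy k := by
  rw [← lie_jx_jy, Ring.lie_def, add_sub_cancel]

section lift

variable {A : Type*} [Semiring A] [Algebra k A]

noncomputable def lift (a b : A) (h : a * b = b * a + b * b) : JordanPlane k →ₐ[k] A :=
  RingQuot.liftAlgHom k ⟨FreeAlgebra.lift k (fun i => if i then a else b), by
    rintro _ _ ⟨⟩
    simpa using h⟩

variable {a b : A} {h : a * b = b * a + b * b}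

@[simp] theorem lift_jx : lift a b h (jx k) = a := by
  simp [lift, jx]

@[simp] theorem lift_jy : lift a b h (jy k) = b := by
  simp [lift, jy]

@[ext] theorem algHom_ext {f g : JordanPlane k →ₐ[k] A} (hx : f (jx k) = g (jx k))
    (hy : f (jy k) = g (jy k)) : f = g := by
  refine RingQuot.ringQuot_ext' _ _ _ (FreeAlgebra.hom_ext (funext fun i => ?_))
  cases i
  · exact hy
  · exact hx

end lift

theorem algEquiv_ext {φ ψ : JordanPlane k ≃ₐ[k] JordanPlane k} (hx : φ (jx k) = ψ (jx k))
    (hy : φ (jy k) = ψ (jy k)) : φ = ψ :=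
  AlgEquiv.coe_toAlgHom_injective (algHom_ext hx hy)

theorem induction_on {P : JordanPlane k → Prop} (one : P 1)
    (add : ∀ r s, P r → P s → P (r + s)) (smul : ∀ (c : k) r, P r → P (c • r))
    (jx_mul : ∀ r, P r → P (jx k * r)) (jy_mul : ∀ r, P r → P (jy k * r))
    (r : JordanPlane k) : P r := by
  obtain ⟨w, rfl⟩ := RingQuot.mkAlgHom_surjective k (JordanRel k) r
  suffices ∀ s, P s → P (RingQuot.mkAlgHom k (JordanRel k) w * s) by simpa using this 1 one
  induction w using FreeAlgebra.induction with
  | grade0 c => intro s hs; simpa [Algebra.smul_def] using smul c s hs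
  | grade1 i => cases i; exacts [jy_mul, jx_mul]
  | mul u v hu hv => intro s hs; rw [map_mul, mul_assoc]; exact hu _ (hv s hs)
  | add u v hu hv => intro s hs; rw [map_add, add_mul]; exact add _ _ (hu s hs) (hv s hs)

theorem commute_aeval_jy (p : k[X]) : Commute (aeval (jy k) p) (jy k) := by
  simpa [Commute, SemiconjBy] using congrArg (aeval (jy k)) (mul_comm p X)

theorem jx_mul_jy_pow (n : ℕ) : jx k * jy k ^ n = jy k ^ n * jx k + n • jy k ^ (n + 1) := by
  induction n with
  | zero => simp
  | succ n ih =>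
    rw [pow_succ, ← mul_assoc, ih, add_mul, mul_assoc, jx_mul_jy, smul_mul_assoc, succ_nsmul]
    simp only [mul_add, ← mul_assoc, ← pow_succ]
    abel

theorem jx_mul_aeval_jy (p : k[X]) :
    jx k * aeval (jy k) p = aeval (jy k) p * jx k + jy k ^ 2 * aeval (jy k) (derivative p) := by
  induction p using Polynomial.induction_on' with
  | add p q hp hq => simp only [map_add, mul_add, add_mul, hp, hq]; abel
  | monomial n c =>
    cases n with
    | zero => simp [Algebra.commutes]
    | succ n =>
      simp only [aeval_monomial, derivative_monomial, ← Algebra.smul_def, mul_smul_comm,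
        smul_mul_assoc, jx_mul_jy_pow]
      rw [Nat.add_sub_cancel, ← pow_add, smul_add, mul_smul, Nat.cast_smul_eq_nsmul,
        add_comm 2]

noncomputable def coeffDerivation : Derivation k k[X][X] k[X][X] :=
  PolynomialModule.equivPolynomialSelf.compDer ((X ^ 2 : k[X]) • derivative').mapCoeffs

theorem coeff_coeffDerivation (g : k[X][X]) (i : ℕ) :
    (coeffDerivation g).coeff i = X ^ 2 * derivative (g.coeff i) := rfl

theorem coeffDerivation_monomial (n : ℕ) (c : k[X]) :
    coeffDerivation (monomial n c) = monomial n (X ^ 2 * derivative c) := by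
  ext i
  simp only [coeff_coeffDerivation, coeff_monomial]
  split_ifs <;> simp

theorem coeffDerivation_C_X : coeffDerivation (C X : k[X][X]) = C (X ^ 2) := by
  simpa using coeffDerivation_monomial (k := k) 0 X

theorem natDegree_coeffDerivation_le (g : k[X][X]) :
    (coeffDerivation g).natDegree ≤ g.natDegree := by
  rw [natDegree_le_iff_coeff_eq_zero]
  intro i hi
  simp [coeff_coeffDerivation, coeff_eq_zero_of_natDegree_lt hi]

/-- The left regular representation in the coordinates `y ^ a * x ^ b ↦ t ^ a * s ^ b`, where
`t = C X` and `s = X` in `k[X][X]`: `y` acts as `t` and `x` as `s + t ^ 2 • d/dt`. -/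
noncomputable def normalOrderRep : JordanPlane k →ₐ[k] Module.End k k[X][X] :=
  lift (LinearMap.mulLeft k X + coeffDerivation.toLinearMap) (LinearMap.mulLeft k (C X)) <| by
    ext1 g
    simp only [Module.End.mul_apply, LinearMap.add_apply, LinearMap.mulLeft_apply,
      Derivation.coeFn_coe, Derivation.leibniz, coeffDerivation_C_X, smul_eq_mul, C_pow]
    ring

theorem normalOrderRep_jx_apply (g : k[X][X]) :
    normalOrderRep (jx k) g = X * g + coeffDerivation g := by
  simp [normalOrderRep]

theorem normalOrderRep_jy_apply (g : k[X][X]) : normalOrderRep (jy k) g = C X * g := by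
  simp [normalOrderRep]

theorem normalOrderRep_aeval_jy_apply (c : k[X]) (g : k[X][X]) :
    normalOrderRep (aeval (jy k) c) g = C c * g := by
  induction c using Polynomial.induction_on' with
  | add p q hp hq => simp only [map_add, LinearMap.add_apply, hp, hq, add_mul]
  | monomial n a =>
    have hpow : ∀ n, (normalOrderRep (jy k))^[n] g = C X ^ n * g := by
      intro n
      induction n with
      | zero => simp
      | succ n ih =>
        rw [Function.iterate_succ_apply', ih, normalOrderRep_jy_apply, pow_succ', mul_assoc]
    rw [aeval_monomial, ← Algebra.smul_def, map_smul, map_pow, LinearMap.smul_apply,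
      Module.End.pow_apply, hpow]
    simp [← C_mul_X_pow_eq_monomial, Algebra.smul_def, mul_assoc]

noncomputable def normalForm : JordanPlane k →ₗ[k] k[X][X] where
  toFun r := normalOrderRep r 1
  map_add' r s := by simp
  map_smul' c r := by simp

theorem normalForm_mul (r s : JordanPlane k) :
    normalForm (r * s) = normalOrderRep r (normalForm s) := by
  simp [normalForm]

@[simp] theorem normalForm_one : normalForm (1 : JordanPlane k) = 1 := by
  simp [normalForm]

theorem normalForm_jx_mul (r : JordanPlane k) :
    normalForm (jx k * r) = X * normalForm r + coeffDerivation (normalForm r) := by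
  rw [normalForm_mul, normalOrderRep_jx_apply]

theorem normalForm_jy_mul (r : JordanPlane k) : normalForm (jy k * r) = C X * normalForm r := by
  rw [normalForm_mul, normalOrderRep_jy_apply]

theorem normalForm_aeval_jy_mul (c : k[X]) (r : JordanPlane k) :
    normalForm (aeval (jy k) c * r) = C c * normalForm r := by
  rw [normalForm_mul, normalOrderRep_aeval_jy_apply]

@[simp] theorem normalForm_aeval_jy (c : k[X]) : normalForm (aeval (jy k) c) = C c := by
  simpa using normalForm_aeval_jy_mul c 1

@[simp] theorem normalForm_jx : normalForm (jx k) = X := by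
  simpa [coeffDerivation] using normalForm_jx_mul (1 : JordanPlane k)

@[simp] theorem normalForm_jy : normalForm (jy k) = C X := by
  simpa using normalForm_jy_mul (1 : JordanPlane k)

theorem normalForm_jx_pow (b : ℕ) : normalForm (jx k ^ b) = X ^ b := by
  induction b with
  | zero => simp
  | succ b ih =>
    rw [pow_succ', normalForm_jx_mul, ih, X_pow_eq_monomial, coeffDerivation_monomial]
    simp [← X_pow_eq_monomial, pow_succ']

noncomputable def ofNormalForm : k[X][X] →ₗ[k] JordanPlane k :=
  lsum fun b => (LinearMap.mulRight k (jx k ^ b)).comp (aeval (jy k)).toLinearMap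

theorem ofNormalForm_monomial (b : ℕ) (c : k[X]) :
    ofNormalForm (monomial b c) = aeval (jy k) c * jx k ^ b := by
  simp [ofNormalForm]

theorem ofNormalForm_eq_sum (f : k[X][X]) {n : ℕ} (hf : f.natDegree < n) :
    ofNormalForm f = ∑ b ∈ Finset.range n, aeval (jy k) (f.coeff b) * jx k ^ b := by
  simp [ofNormalForm, lsum_apply, sum_over_range' _ _ n hf]

theorem ofNormalForm_C_X_mul (f : k[X][X]) :
    ofNormalForm (C X * f) = jy k * ofNormalForm f := by
  induction f using Polynomial.induction_on' with
  | add p q hp hq => simp only [mul_add, map_add, hp, hq]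
  | monomial b c =>
    rw [C_mul_monomial, ofNormalForm_monomial, ofNormalForm_monomial, map_mul, aeval_X,
      mul_assoc]

theorem ofNormalForm_X_mul_add (f : k[X][X]) :
    ofNormalForm (X * f + coeffDerivation f) = jx k * ofNormalForm f := by
  induction f using Polynomial.induction_on' with
  | add p q hp hq =>
    simp only [mul_add, map_add] at *
    rw [← hp, ← hq]
    abel
  | monomial b c =>
    rw [X_mul_monomial, coeffDerivation_monomial, map_add, ofNormalForm_monomial,
      ofNormalForm_monomial, ofNormalForm_monomial, ← mul_assoc, jx_mul_aeval_jy, map_mul,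
      map_pow, aeval_X, add_mul, pow_succ']
    simp only [mul_assoc]

theorem ofNormalForm_normalForm (r : JordanPlane k) : ofNormalForm (normalForm r) = r := by
  induction r using induction_on with
  | one => simpa using ofNormalForm_monomial (k := k) 0 1
  | add r s hr hs => rw [map_add, map_add, hr, hs]
  | smul c r hr => rw [map_smul, map_smul, hr]
  | jx_mul r hr => rw [normalForm_jx_mul, ofNormalForm_X_mul_add, hr]
  | jy_mul r hr => rw [normalForm_jy_mul, ofNormalForm_C_X_mul, hr]

theorem normalForm_injective : Function.Injective (normalForm (k := k)) :=
  Function.LeftInverse.injective ofNormalForm_normalForm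

instance : Nontrivial (JordanPlane k) :=
  ⟨⟨1, 0, fun h => (one_ne_zero : (1 : k[X][X]) ≠ 0) <| by
    simpa using congrArg (normalForm (k := k)) h⟩⟩

theorem jy_ne_zero : jy k ≠ 0 := fun h => by
  simpa using congrArg normalForm h

theorem aeval_jy_injective : Function.Injective (aeval (jy k) : k[X] → JordanPlane k) :=
  fun p q h => C_injective (by simpa using congrArg normalForm h)

theorem isLeftRegular_jy : IsLeftRegular (jy k) := fun r s h => by
  refine normalForm_injective (mul_left_cancel₀ (C_ne_zero.mpr X_ne_zero) ?_)
  simpa [normalForm_jy_mul] using congrArg normalForm h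

theorem normalOrderRep_apply_eq_sum {r : JordanPlane k} {m : ℕ}
    (hr : (normalForm r).natDegree ≤ m) (g : k[X][X]) :
    normalOrderRep r g =
      ∑ b ∈ Finset.range (m + 1), C ((normalForm r).coeff b) * normalOrderRep (jx k ^ b) g := by
  conv_lhs => rw [← ofNormalForm_normalForm r, ofNormalForm_eq_sum _ (Nat.lt_succ_of_le hr)]
  simp [map_sum, normalOrderRep_aeval_jy_apply]

theorem normalOrderRep_jx_pow_apply {g : k[X][X]} {n : ℕ} (hg : g.natDegree ≤ n) (b : ℕ) :
    (normalOrderRep (jx k ^ b) g).natDegree ≤ n + b ∧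
      (normalOrderRep (jx k ^ b) g).coeff (n + b) = g.coeff n := by
  induction b with
  | zero => simpa using hg
  | succ b ih =>
    rw [pow_succ', map_mul, Module.End.mul_apply, normalOrderRep_jx_apply]
    generalize normalOrderRep (jx k ^ b) g = h at ih ⊢
    have hD := (natDegree_coeffDerivation_le h).trans ih.1
    refine ⟨natDegree_add_le_of_degree_le ?_ (by omega), ?_⟩
    · exact natDegree_mul_le.trans (by have := natDegree_X_le (R := k[X]); omega)
    · rw [← add_assoc, coeff_add, coeff_X_mul, ih.2,
        coeff_eq_zero_of_natDegree_lt (p := coeffDerivation h) (by omega), add_zero]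

theorem coeff_normalForm_mul {r s : JordanPlane k} {m n : ℕ}
    (hr : (normalForm r).natDegree ≤ m) (hs : (normalForm s).natDegree ≤ n) :
    (normalForm (r * s)).coeff (m + n) = (normalForm r).coeff m * (normalForm s).coeff n := by
  rw [normalForm_mul, normalOrderRep_apply_eq_sum hr, finsetSum_coeff, Finset.sum_range_succ,
    Finset.sum_eq_zero, zero_add, coeff_C_mul, add_comm m, (normalOrderRep_jx_pow_apply hs m).2]
  intro b hb
  rw [coeff_C_mul, coeff_eq_zero_of_natDegree_lt (p := normalOrderRep _ _), mul_zero]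
  have := (normalOrderRep_jx_pow_apply hs b).1
  have := Finset.mem_range.mp hb
  omega

theorem normalForm_lie_jx_pow_jy (b : ℕ) :
    (normalForm ⁅jx k ^ (b + 1), jy k⁆).natDegree ≤ b ∧
      (normalForm ⁅jx k ^ (b + 1), jy k⁆).coeff b = (b + 1 : k[X]) * X ^ 2 := by
  induction b with
  | zero =>
    rw [zero_add, pow_one, lie_jx_jy, normalForm_jy_mul, normalForm_jy, ← C_mul, natDegree_C,
      coeff_C_zero]
    exact ⟨le_rfl, by push_cast; ring⟩
  | succ b ih =>
    have hstep : ⁅jx k ^ (b + 1 + 1), jy k⁆ =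
        jx k * ⁅jx k ^ (b + 1), jy k⁆ + aeval (jy k) (X ^ 2 : k[X]) * jx k ^ (b + 1) := by
      rw [map_pow, aeval_X, sq, ← lie_jx_jy, pow_succ' (jx k) (b + 1)]
      simp only [Ring.lie_def, mul_sub, sub_mul, mul_assoc]
      abel
    rw [hstep, map_add, normalForm_jx_mul, normalForm_aeval_jy_mul, normalForm_jx_pow]
    generalize normalForm ⁅jx k ^ (b + 1), jy k⁆ = e at ih ⊢
    have hD := (natDegree_coeffDerivation_le e).trans ih.1
    refine ⟨natDegree_add_le_of_degree_le (natDegree_add_le_of_degree_le ?_ (by omega)) ?_, ?_⟩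
    · exact natDegree_mul_le.trans (by have := natDegree_X_le (R := k[X]); omega)
    · exact natDegree_C_mul_le _ _ |>.trans (by simp)
    · rw [coeff_add, coeff_add, coeff_X_mul, ih.2,
        coeff_eq_zero_of_natDegree_lt (p := coeffDerivation e) (by omega), coeff_C_mul_X_pow,
        if_pos rfl]
      push_cast
      ring

theorem coeff_normalForm_lie_jy {r : JordanPlane k} {m : ℕ}
    (hr : (normalForm r).natDegree ≤ m + 1) :
    (normalForm ⁅r, jy k⁆).coeff m = (m + 1 : k[X]) * X ^ 2 * (normalForm r).coeff (m + 1) := by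
  have hsum : ⁅r, jy k⁆ = ∑ b ∈ Finset.range (m + 1 + 1),
      aeval (jy k) ((normalForm r).coeff b) * ⁅jx k ^ b, jy k⁆ := by
    conv_lhs => rw [← ofNormalForm_normalForm r, ofNormalForm_eq_sum _ (Nat.lt_succ_of_le hr)]
    rw [Ring.lie_def, Finset.sum_mul, Finset.mul_sum, ← Finset.sum_sub_distrib]
    refine Finset.sum_congr rfl fun b _ => ?_
    rw [Ring.lie_def, mul_sub, mul_assoc, ← mul_assoc (jy k),
      ← (commute_aeval_jy _).eq, mul_assoc]
  rw [hsum, map_sum, finsetSum_coeff, Finset.sum_range_succ, Finset.sum_eq_zero, zero_add,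
    normalForm_aeval_jy_mul, coeff_C_mul, (normalForm_lie_jx_pow_jy m).2]
  · ring
  · intro b hb
    rw [normalForm_aeval_jy_mul, coeff_C_mul]
    cases b with
    | zero => simp [Ring.lie_def]
    | succ b =>
      rw [coeff_eq_zero_of_natDegree_lt (p := normalForm ⁅jx k ^ (b + 1), jy k⁆), mul_zero]
      have := (normalForm_lie_jx_pow_jy (k := k) b).1
      have := Finset.mem_range.mp hb
      omega

theorem exists_eq_algebraMap_of_mul_eq_one {r s : JordanPlane k} (h : r * s = 1) :
    ∃ c : k, c ≠ 0 ∧ r = algebraMap k (JordanPlane k) c := by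
  have hne : ∀ t : JordanPlane k, t ≠ 0 → normalForm t ≠ 0 :=
    fun t => (map_ne_zero_iff _ normalForm_injective).mpr
  have hcoeff := coeff_normalForm_mul (le_refl (normalForm r).natDegree)
    (le_refl (normalForm s).natDegree)
  rw [h, normalForm_one, coeff_one] at hcoeff
  have hlc : (normalForm r).leadingCoeff * (normalForm s).leadingCoeff ≠ 0 :=
    mul_ne_zero (leadingCoeff_ne_zero.mpr (hne r (left_ne_zero_of_mul_eq_one h)))
      (leadingCoeff_ne_zero.mpr (hne s (right_ne_zero_of_mul_eq_one h)))
  split_ifs at hcoeff with h0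
  · have hr0 : (normalForm r).natDegree = 0 := by omega
    rw [hr0] at hcoeff
    obtain ⟨c, hc, hca⟩ := Polynomial.isUnit_iff.mp (IsUnit.of_mul_eq_one _ hcoeff.symm)
    refine ⟨c, hc.ne_zero, normalForm_injective ?_⟩
    rw [← aeval_C (jy k), normalForm_aeval_jy, hca, ← eq_C_of_natDegree_eq_zero hr0]
  · exact absurd hcoeff.symm hlc

theorem exists_eq_smul_jx_add_aeval_of_lie_jy [CharZero k] {r : JordanPlane k} {c : k}
    (h : ⁅r, jy k⁆ = c • (jy k * jy k)) : ∃ p : k[X], r = c • jx k + aeval (jy k) p := by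
  have hσ : normalForm ⁅r, jy k⁆ = C (C c * X ^ 2) := by
    rw [h, map_smul, normalForm_jy_mul, normalForm_jy]
    simp [Algebra.smul_def, sq]
  have hdeg : (normalForm r).natDegree ≤ 1 := by
    by_contra! hlt
    obtain ⟨n, hn⟩ : ∃ n, (normalForm r).natDegree = n + 2 :=
      ⟨_, (Nat.sub_add_cancel hlt).symm⟩
    have hcoeff := coeff_normalForm_lie_jy (m := n + 1) hn.le
    rw [hσ, coeff_C, if_neg (by omega), ← hn] at hcoeff
    refine mul_ne_zero (mul_ne_zero ?_ (pow_ne_zero 2 X_ne_zero))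
      (leadingCoeff_ne_zero.mpr (ne_zero_of_natDegree_gt hlt)) hcoeff.symm
    exact_mod_cast (n + 1).succ_ne_zero
  have h1 : (normalForm r).coeff 1 = C c := by
    have hcoeff := coeff_normalForm_lie_jy (m := 0) hdeg
    rw [hσ, coeff_C_zero, Nat.cast_zero, zero_add, one_mul, mul_comm] at hcoeff
    exact (mul_left_cancel₀ (pow_ne_zero 2 X_ne_zero) hcoeff).symm
  refine ⟨(normalForm r).coeff 0, normalForm_injective ?_⟩
  rw [map_add, map_smul, normalForm_jx, normalForm_aeval_jy,
    eq_X_add_C_of_natDegree_le_one hdeg, h1]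
  simp [Algebra.smul_def]

theorem exists_eq_aeval_jx_add_jy_mul (r : JordanPlane k) :
    ∃ (q : k[X]) (u : JordanPlane k), r = aeval (jx k) q + jy k * u := by
  induction r using induction_on with
  | one => exact ⟨1, 0, by simp⟩
  | add r s hr hs =>
    obtain ⟨q, u, rfl⟩ := hr
    obtain ⟨q', u', rfl⟩ := hs
    exact ⟨q + q', u + u', by rw [map_add, mul_add]; abel⟩
  | smul c r hr =>
    obtain ⟨q, u, rfl⟩ := hr
    exact ⟨c • q, c • u, by rw [map_smul, smul_add, mul_smul_comm]⟩
  | jx_mul r hr =>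
    obtain ⟨q, u, rfl⟩ := hr
    refine ⟨X * q, (jx k + jy k) * u, ?_⟩
    rw [map_mul, aeval_X, mul_add, ← mul_assoc, ← mul_assoc, jx_mul_jy, ← mul_add]
  | jy_mul r _ => exact ⟨0, r, by simp⟩

noncomputable def modJy : JordanPlane k →ₐ[k] k[X] :=
  lift X 0 (by simp)

theorem map_jy_eq_zero {A : Type*} [CommRing A] [NoZeroDivisors A] [Algebra k A]
    (f : JordanPlane k →ₐ[k] A) : f (jy k) = 0 :=
  mul_self_eq_zero.mp <| by
    rw [← map_mul, ← lie_jx_jy, Ring.lie_def, map_sub, map_mul, map_mul, mul_comm, sub_self]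

theorem exists_map_jy_eq_jy_mul {F : Type*} [FunLike F (JordanPlane k) (JordanPlane k)]
    [AlgHomClass F k (JordanPlane k) (JordanPlane k)] (φ : F) : ∃ u, φ (jy k) = jy k * u := by
  obtain ⟨q, u, hqu⟩ := exists_eq_aeval_jx_add_jy_mul (φ (jy k))
  have hq : q = 0 := by
    simpa [hqu, modJy, ← aeval_algHom_apply] using
      map_jy_eq_zero (modJy.comp (AlgHomClass.toAlgHom φ))
  exact ⟨u, by rw [hqu, hq, map_zero, zero_add]⟩

theorem exists_map_jy_eq_smul (φ : JordanPlane k ≃ₐ[k] JordanPlane k) :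
    ∃ α : k, α ≠ 0 ∧ φ (jy k) = α • jy k := by
  obtain ⟨u, hu⟩ := exists_map_jy_eq_jy_mul φ
  obtain ⟨v, hv⟩ := exists_map_jy_eq_jy_mul φ.symm
  have huv : u * φ v = 1 := isLeftRegular_jy <| show jy k * _ = jy k * 1 by
    rw [mul_one, ← mul_assoc, ← hu, ← map_mul, ← hv, AlgEquiv.apply_symm_apply]
  obtain ⟨α, hα, rfl⟩ := exists_eq_algebraMap_of_mul_eq_one huv
  exact ⟨α, hα, by rw [hu, Algebra.smul_def, Algebra.commutes]⟩

theorem exists_map_jx_eq_and_map_jy_eq [CharZero k] (φ : JordanPlane k ≃ₐ[k] JordanPlane k) :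
    ∃ α : k, α ≠ 0 ∧ ∃ p : k[X],
      φ (jx k) = α • jx k + aeval (jy k) p ∧ φ (jy k) = α • jy k := by
  obtain ⟨α, hα, hy⟩ := exists_map_jy_eq_smul φ
  have hlie : ⁅φ (jx k), jy k⁆ = α • (jy k * jy k) := by
    have := congrArg φ (lie_jx_jy (k := k))
    simp only [Ring.lie_def, map_sub, map_mul, hy, smul_mul_assoc, mul_smul_comm] at this
    refine smul_right_injective _ hα ?_
    simpa only [Ring.lie_def, smul_sub] using this
  obtain ⟨p, hp⟩ := exists_eq_smul_jx_add_aeval_of_lie_jy hlie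
  exact ⟨α, hα, p, hp, hy⟩

noncomputable def translateEnd :
    Multiplicative k[X] →* (JordanPlane k →ₐ[k] JordanPlane k) where
  toFun p := lift (jx k + aeval (jy k) p.toAdd) (jy k) <| by
    rw [add_mul, jx_mul_jy, (commute_aeval_jy _).eq, mul_add]
    abel
  map_one' := algHom_ext (by simp) (by simp)
  map_mul' p q := algHom_ext (by simp [← aeval_algHom_apply, add_assoc]) (by simp)

noncomputable def scaleEnd : k →* (JordanPlane k →ₐ[k] JordanPlane k) where
  toFun α := lift (α • jx k) (α • jy k) <| by
    simp only [smul_mul_smul_comm, jx_mul_jy, smul_add]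
  map_one' := algHom_ext (by simp) (by simp)
  map_mul' α β := algHom_ext (by simp [mul_comm α, mul_smul]) (by simp [mul_comm α, mul_smul])

noncomputable def translation : Multiplicative k[X] →* (JordanPlane k ≃ₐ[k] JordanPlane k) :=
  (AlgEquiv.algHomUnitsEquiv k _).toMonoidHom.comp translateEnd.toHomUnits

noncomputable def scaling : kˣ →* (JordanPlane k ≃ₐ[k] JordanPlane k) :=
  (AlgEquiv.algHomUnitsEquiv k _).toMonoidHom.comp (scaleEnd.comp (Units.coeHom k)).toHomUnits

@[simp] theorem translation_apply_jx (p : Multiplicative k[X]) :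
    translation p (jx k) = jx k + aeval (jy k) p.toAdd := by
  simp [translation, translateEnd]

@[simp] theorem translation_apply_jy (p : Multiplicative k[X]) :
    translation p (jy k) = jy k := by
  simp [translation, translateEnd]

@[simp] theorem scaling_apply_jy (α : kˣ) : scaling α (jy k) = (α : k) • jy k := by
  simp [scaling, scaleEnd]

noncomputable def scaleFactor : (JordanPlane k ≃ₐ[k] JordanPlane k) →* kˣ :=
  MonoidHom.mk' (fun φ => Units.mk0 _ (exists_map_jy_eq_smul φ).choose_spec.1) fun φ ψ =>
    Units.ext <| smul_left_injective k (jy_ne_zero (k := k)) <| by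
      have h (φ : JordanPlane k ≃ₐ[k] JordanPlane k) :=
        (exists_map_jy_eq_smul φ).choose_spec.2
      simp only [Units.val_mul, Units.val_mk0]
      rw [mul_comm, mul_smul, ← h φ, ← map_smul, ← h ψ, ← h (φ * ψ), AlgEquiv.mul_apply]

theorem map_jy_eq_scaleFactor_smul (φ : JordanPlane k ≃ₐ[k] JordanPlane k) :
    φ (jy k) = (scaleFactor φ : k) • jy k :=
  (exists_map_jy_eq_smul φ).choose_spec.2

theorem scaleFactor_eq_of_map_jy {φ : JordanPlane k ≃ₐ[k] JordanPlane k} {α : kˣ}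
    (h : φ (jy k) = (α : k) • jy k) : scaleFactor φ = α :=
  Units.ext <| smul_left_injective k (jy_ne_zero (k := k)) <|
    (map_jy_eq_scaleFactor_smul φ).symm.trans h

theorem scaleFactor_scaling (α : kˣ) : scaleFactor (scaling α) = α :=
  scaleFactor_eq_of_map_jy (scaling_apply_jy α)

noncomputable def autExtension [CharZero k] :
    GroupExtension (Multiplicative k[X]) (JordanPlane k ≃ₐ[k] JordanPlane k) kˣ where
  inl := translation
  rightHom := scaleFactor
  inl_injective := (injective_iff_map_eq_one _).mpr fun p hp => by
    have := congrArg (· (jx k)) hp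
    simp only [translation_apply_jx, AlgEquiv.one_apply, add_eq_left] at this
    exact toAdd_eq_zero.mp (aeval_jy_injective (this.trans (map_zero _).symm))
  range_inl_eq_ker_rightHom := by
    ext φ
    refine ⟨?_, fun hφ => ?_⟩
    · rintro ⟨p, rfl⟩
      exact scaleFactor_eq_of_map_jy (by simp)
    · obtain ⟨α, hα, p, hx, hy⟩ := exists_map_jx_eq_and_map_jy_eq φ
      have hα1 : α = 1 := by
        simpa using congrArg Units.val <|
          (scaleFactor_eq_of_map_jy (α := .mk0 α hα) hy).symm.trans hφ
      exact ⟨.ofAdd p, algEquiv_ext (by simp [hx, hα1]) (by simp [hy, hα1])⟩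
  rightHom_surjective α := ⟨scaling α, scaleFactor_scaling α⟩

noncomputable def autSplitting [CharZero k] : (autExtension (k := k)).Splitting where
  __ := scaling
  rightInverse_rightHom := scaleFactor_scaling

end JordanPlane

theorem jordanPlane_automorphisms_general (k : Type) [Field k] [CharZero k] :
    (∀ φ : JordanPlane k ≃ₐ[k] JordanPlane k, ∃ α : k, α ≠ 0 ∧ ∃ p : Polynomial k,
        φ (jx k) = algebraMap k (JordanPlane k) α * jx k + Polynomial.aeval (jy k) p ∧
        φ (jy k) = algebraMap k (JordanPlane k) α * jy k) ∧
    ∃ act : kˣ →* MulAut (Multiplicative (Polynomial k)),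
      Nonempty ((JordanPlane k ≃ₐ[k] JordanPlane k) ≃*
        Multiplicative (Polynomial k) ⋊[act] kˣ) := by
  refine ⟨fun φ => ?_, _, ⟨JordanPlane.autSplitting.semidirectProductMulEquiv.symm⟩⟩
  simpa only [← Algebra.smul_def] using JordanPlane.exists_map_jx_eq_and_map_jy_eq φ

theorem jordanPlane_automorphisms (k : Type) [Field k] [IsAlgClosed k] [CharZero k] :
    (∀ φ : JordanPlane k ≃ₐ[k] JordanPlane k, ∃ α : k, α ≠ 0 ∧ ∃ p : Polynomial k,
        φ (jx k) = algebraMap k (JordanPlane k) α * jx k + Polynomial.aeval (jy k) p ∧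
        φ (jy k) = algebraMap k (JordanPlane k) α * jy k) ∧
    ∃ act : kˣ →* MulAut (Multiplicative (Polynomial k)),
      Nonempty ((JordanPlane k ≃ₐ[k] JordanPlane k) ≃*
        Multiplicative (Polynomial k) ⋊[act] kˣ) :=
  jordanPlane_automorphisms_general k
end

section
/- Let X, Y ∈ M_n(k) satisfy XY - YX = Y² over an algebraically closed field k of characteristic 0. Then X and Y can be simultaneously conjugated to upper triangular form; equivalently, there is a complete flag invariant under both X and Y. -/
/-!
If `Y` were invertible, the relation would give `X Y⁻¹ - Y⁻¹ X = -1`, whose trace reads `0 = -n`;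
so in characteristic zero `Y` has a nonzero kernel. Since `[X, Y] = Y²`, this kernel is
`X`-invariant, so it contains an eigenvector `v` of `X`. The line `k v` is invariant under both
maps, the relation descends to the quotient by it, and induction on the dimension produces a
complete flag invariant under `X` and `Y`, i.e. a basis in which both are upper triangular.
-/

open Module Submodule

theorem Units.mul_inv_sub_inv_mul_eq_neg_one {R : Type*} [Ring R] {f : R} {u : Rˣ}
    (h : f * u - u * f = (u : R) ^ 2) : f * ↑u⁻¹ - ↑u⁻¹ * f = -1 := by
  calc f * ↑u⁻¹ - ↑u⁻¹ * f = -(↑u⁻¹ * (f * u - u * f) * ↑u⁻¹) := by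
        simp only [mul_sub, sub_mul, mul_assoc, Units.mul_inv, mul_one, Units.inv_mul_cancel_left]
        abel
    _ = -1 := by simp [h, sq]

theorem Fin.image_cons_castSucc_lt_succ {m : ℕ} {α : Type*} (a : α) (w : Fin m → α)
    (j : Fin (m + 1)) :
    Fin.cons a w '' {i : Fin (m + 1) | i.castSucc < j.succ} =
      insert a (w '' {i | i.castSucc < j}) := by
  ext x
  simp [Fin.exists_fin_succ, Fin.castSucc_lt_iff_succ_le, eq_comm]

section Quotient

variable {R M : Type*} [Ring R] [AddCommGroup M] [Module R M] {K : Submodule R M}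
  {f g : End R M}

theorem Submodule.comap_mkQ_mem_invtSubmodule (hf : K ≤ K.comap f) {p : Submodule R (M ⧸ K)}
    (hp : p ∈ End.invtSubmodule (K.mapQ K f hf)) : p.comap K.mkQ ∈ f.invtSubmodule :=
  fun _ hx ↦ hp hx

theorem Submodule.mapQ_mul_sub_mul_eq_sq (hf : K ≤ K.comap f) (hg : K ≤ K.comap g)
    (h : f * g - g * f = g ^ 2) :
    K.mapQ K f hf * K.mapQ K g hg - K.mapQ K g hg * K.mapQ K f hf = K.mapQ K g hg ^ 2 := by
  ext x
  simpa [sq] using congrArg K.mkQ (LinearMap.congr_fun h x)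

end Quotient

section FiniteDimensional

variable {k V : Type*} [Field k] [AddCommGroup V] [Module k V] [FiniteDimensional k V]
  {f g : End k V}

theorem Module.End.not_isUnit_of_mul_sub_mul_eq_sq [CharZero k] [Nontrivial V]
    (h : f * g - g * f = g ^ 2) : ¬IsUnit g := by
  rintro ⟨u, rfl⟩
  have htr := congrArg (LinearMap.trace k V) (Units.mul_inv_sub_inv_mul_eq_neg_one h)
  rw [map_sub, LinearMap.trace_mul_comm, sub_self, map_neg, LinearMap.trace_one] at htr
  exact Nat.cast_ne_zero.mpr finrank_pos.ne' (neg_eq_zero.mp htr.symm)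

theorem Module.End.exists_eigenvector_mem_ker_of_mul_sub_mul_eq_sq [IsAlgClosed k] [CharZero k]
    [Nontrivial V] (h : f * g - g * f = g ^ 2) : ∃ v ≠ 0, g v = 0 ∧ ∃ μ : k, f v = μ • v := by
  have hker : LinearMap.ker g ≠ ⊥ := fun hbot ↦
    not_isUnit_of_mul_sub_mul_eq_sq h ((LinearMap.isUnit_iff_ker_eq_bot g).mpr hbot)
  have hf : ∀ x ∈ LinearMap.ker g, f x ∈ LinearMap.ker g := by
    intro x hx
    have hx' := LinearMap.congr_fun h x
    rw [LinearMap.mem_ker] at hx ⊢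
    simpa [sq, hx] using hx'
  have := nontrivial_iff_ne_bot.mpr hker
  obtain ⟨μ, hμ⟩ := Module.End.exists_eigenvalue (f.restrict hf)
  obtain ⟨⟨v, hv⟩, hvμ⟩ := hμ.exists_hasEigenvector
  exact ⟨v, by simpa using hvμ.2, hv, μ, congrArg Subtype.val hvμ.apply_eq_smul⟩

theorem Module.Basis.exists_flag_succ_eq_comap_mkQ {m : ℕ} {v : V} (hv : v ≠ 0)
    (bq : Basis (Fin m) k (V ⧸ k ∙ v)) :
    ∃ b : Basis (Fin (m + 1)) k V, ∀ j, b.flag j.succ = (bq.flag j).comap (k ∙ v).mkQ := by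
  obtain ⟨w, hw⟩ : ∃ w : Fin m → V, (k ∙ v).mkQ ∘ w = bq :=
    ⟨_, funext fun j ↦ Function.rightInverse_surjInv (k ∙ v).mkQ_surjective (bq j)⟩
  have hflag : ∀ j, span k (Fin.cons v w '' {i | i.castSucc < j.succ}) =
      (bq.flag j).comap (k ∙ v).mkQ := by
    intro j
    rw [Fin.image_cons_castSucc_lt_succ, span_insert, flag, ← hw, Set.image_comp, ← map_span,
      comap_map_mkQ]
  have hspan : ⊤ ≤ span k (Set.range (Fin.cons v w : Fin (m + 1) → V)) := by
    simpa [← Set.image_univ, Fin.castSucc_lt_succ_iff] using (hflag (Fin.last m)).ge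
  have hcard : Fintype.card (Fin (m + 1)) = finrank k V := by
    rw [Fintype.card_fin, ← (k ∙ v).finrank_quotient_add_finrank, finrank_span_singleton hv,
      finrank_eq_card_basis bq, Fintype.card_fin]
  refine ⟨basisOfTopLeSpanOfCardEqFinrank _ hspan hcard, fun j ↦ ?_⟩
  rw [flag, coe_basisOfTopLeSpanOfCardEqFinrank, hflag]

theorem Module.End.exists_basis_flag_mem_invtSubmodule_of_mul_sub_mul_eq_sq [IsAlgClosed k]
    [CharZero k] {m : ℕ} (hm : finrank k V = m) (h : f * g - g * f = g ^ 2) :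
    ∃ b : Basis (Fin m) k V, ∀ i, b.flag i ∈ f.invtSubmodule ∧ b.flag i ∈ g.invtSubmodule := by
  induction m generalizing V with
  | zero =>
    refine ⟨finBasisOfFinrankEq k V hm, fun i ↦ ?_⟩
    simp [Fin.fin_one_eq_zero i]
  | succ m ih =>
    have : Nontrivial V := nontrivial_of_finrank_pos (R := k) (by omega)
    obtain ⟨v, hv, hgv, μ, hfv⟩ := exists_eigenvector_mem_ker_of_mul_sub_mul_eq_sq h
    have hf : k ∙ v ≤ (k ∙ v).comap f := by
      simp [span_singleton_le_iff_mem, hfv, mem_span_singleton_self, smul_mem]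
    have hg : k ∙ v ≤ (k ∙ v).comap g := by
      simp [span_singleton_le_iff_mem, hgv]
    have hq : finrank k (V ⧸ k ∙ v) = m := by
      have := (k ∙ v).finrank_quotient_add_finrank
      rw [finrank_span_singleton hv] at this
      omega
    obtain ⟨bq, hbq⟩ := ih hq (mapQ_mul_sub_mul_eq_sq hf hg h)
    obtain ⟨b, hb⟩ := Basis.exists_flag_succ_eq_comap_mkQ hv bq
    refine ⟨b, Fin.cases ?_ fun j ↦ ?_⟩
    · simp
    · rw [hb]
      exact ⟨comap_mkQ_mem_invtSubmodule hf (hbq j).1, comap_mkQ_mem_invtSubmodule hg (hbq j).2⟩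

end FiniteDimensional

theorem Module.Basis.blockTriangular_toMatrix_of_flag_mem_invtSubmodule {R M : Type*}
    [CommRing R] [AddCommGroup M] [Module R M] {n : ℕ} (b : Basis (Fin n) R M) {f : End R M}
    (hf : ∀ i, b.flag i ∈ f.invtSubmodule) : (LinearMap.toMatrix b b f).BlockTriangular id := by
  intro i j hji
  rw [LinearMap.toMatrix_apply, ← coord_apply]
  exact b.flag_le_ker_coord (Fin.succ_le_castSucc_iff.mpr hji)
    (hf j.succ (b.self_mem_flag Fin.castSucc_lt_succ))

theorem Module.Basis.toMatrix_mul_mul_toMatrix_eq_toMatrix_toLin' {R ι : Type*} [CommRing R]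
    [Fintype ι] [DecidableEq ι] (b : Basis ι R (ι → R)) (A : Matrix ι ι R) :
    b.toMatrix (Pi.basisFun R ι) * A * (Pi.basisFun R ι).toMatrix b =
      LinearMap.toMatrix b b (Matrix.toLin' A) := by
  rw [← basis_toMatrix_mul_linearMap_toMatrix_mul_basis_toMatrix b (Pi.basisFun R ι) b
    (Pi.basisFun R ι), LinearMap.toMatrix_eq_toMatrix', LinearMap.toMatrix'_toLin']

theorem simultaneous_triangularization {k : Type*} [Field k] [IsAlgClosed k] [CharZero k] {n : ℕ}
    (X Y : Matrix (Fin n) (Fin n) k) (h : X * Y - Y * X = Y ^ 2) :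
    ∃ P : GL (Fin n) k,
      Matrix.BlockTriangular
        (((P⁻¹ : GL (Fin n) k) : Matrix (Fin n) (Fin n) k) * X *
          ((P : GL (Fin n) k) : Matrix (Fin n) (Fin n) k)) id ∧
      Matrix.BlockTriangular
        (((P⁻¹ : GL (Fin n) k) : Matrix (Fin n) (Fin n) k) * Y *
          ((P : GL (Fin n) k) : Matrix (Fin n) (Fin n) k)) id := by
  have hlin := congrArg Matrix.toLinAlgEquiv' h
  rw [map_sub, map_mul, map_mul, map_pow] at hlin
  obtain ⟨b, hb⟩ :=
    End.exists_basis_flag_mem_invtSubmodule_of_mul_sub_mul_eq_sq (finrank_fin_fun k) hlin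
  let e := Pi.basisFun k (Fin n)
  refine ⟨⟨e.toMatrix b, b.toMatrix e, e.toMatrix_mul_toMatrix_flip b,
    b.toMatrix_mul_toMatrix_flip e⟩, ?_, ?_⟩
  · rw [Units.inv_mk, b.toMatrix_mul_mul_toMatrix_eq_toMatrix_toLin']
    exact b.blockTriangular_toMatrix_of_flag_mem_invtSubmodule fun i ↦ (hb i).1
  · rw [Units.inv_mk, b.toMatrix_mul_mul_toMatrix_eq_toMatrix_toLin']
    exact b.blockTriangular_toMatrix_of_flag_mem_invtSubmodule fun i ↦ (hb i).2
end

section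
/- Let M be a finite-dimensional module over the Jordan plane R = k⟨x,y⟩/(xy - yx - y²), given by matrices X, Y with XY - YX = Y². Then each generalized eigenspace M_λ = ker (X - λI)^n of X is invariant under Y; consequently M decomposes as a direct sum of R-submodules indexed by the eigenvalues of X, and any indecomposable finite-dimensional R-module has X with a single eigenvalue. -/
/-!
From `⁅X, Y⁆ = Y²` one gets `⁅X, Y ^ p⁆ = p • Y ^ (p + 1)`, hence
`(ad X) ^ p Y = p! • Y ^ (p + 1)`, while `(ad Y) ^ 2 X = 0`. The latter makes `X` preserve each
generalized eigenspace `U` of `Y`; on `U` the trace of `Y² = ⁅X, Y⁆` vanishes but equals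
`ν² dim U` for the eigenvalue `ν`, so in characteristic zero `Y` is nilpotent. Then `ad X` is
nilpotent on `Y`, and the Leibniz expansion
`(X - μ) ^ n Y = ∑ (n choose i) ((ad X) ^ i Y) (X - μ) ^ (n - i)` shows that `Y` preserves the
generalized eigenspaces of `X`. These therefore decompose the module into submodules, and an
indecomposable module can have only one of them nonzero.
-/

open LieAlgebra

attribute [local instance] LieRing.ofAssociativeRing

section JordanPlane

variable {R A : Type*} [CommRing R] [Ring A] [Algebra R A] {x y : A}

lemma lie_pow_of_lie_eq_sq (h : ⁅x, y⁆ = y ^ 2) (n : ℕ) :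
    ⁅x, y ^ n⁆ = n • y ^ (n + 1) := by
  induction n with
  | zero => simpa using (Commute.one_right x).lie_eq
  | succ n ih =>
    rw [Ring.lie_def] at h ih ⊢
    calc x * y ^ (n + 1) - y ^ (n + 1) * x
        = (x * y ^ n - y ^ n * x) * y + y ^ n * (x * y - y * x) := by noncomm_ring
      _ = (n + 1) • y ^ (n + 2) := by
        rw [ih, h, smul_mul_assoc, ← pow_succ, ← pow_add, add_smul, one_smul]

lemma ad_pow_apply_of_lie_eq_sq (h : ⁅x, y⁆ = y ^ 2) (n : ℕ) :
    (ad R A x ^ n) y = n.factorial • y ^ (n + 1) := by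
  induction n with
  | zero => simp
  | succ n ih =>
    rw [pow_succ', Module.End.mul_apply, ih, map_nsmul, ad_apply, lie_pow_of_lie_eq_sq h,
      smul_smul, Nat.factorial_succ, mul_comm]

lemma ad_pow_apply_eq_zero_of_lie_eq_sq (h : ⁅x, y⁆ = y ^ 2) {n : ℕ} (hy : y ^ n = 0) :
    (ad R A x ^ n) y = 0 := by
  rw [ad_pow_apply_of_lie_eq_sq h, pow_succ, hy, zero_mul, smul_zero]

lemma ad_sq_apply_eq_zero_of_lie_eq_sq (h : ⁅x, y⁆ = y ^ 2) : (ad R A y ^ 2) x = 0 := by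
  have hyx : ⁅y, x⁆ = -y ^ 2 := by rw [← h, lie_skew]
  rw [sq (ad R A y), Module.End.mul_apply, ad_apply, ad_apply, hyx, lie_neg,
    (Commute.self_pow y 2).lie_eq, neg_zero]

end JordanPlane

namespace Module.End

section AdNilpotent

open Finset

variable {R M : Type*} [CommRing R] [AddCommGroup M] [Module R M]

lemma pow_apply_eq_sum_ad_pow (f g : Module.End R M) (n : ℕ) (m : M) :
    (f ^ n) (g m) = ∑ ij ∈ antidiagonal n,
      n.choose ij.1 • ((ad R (Module.End R M) f ^ ij.1) g) ((f ^ ij.2) m) := by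
  simpa using LieModule.toEnd_pow_lie R f g m n

lemma ad_sub_smul_one (f : Module.End R M) (μ : R) :
    ad R (Module.End R M) (f - μ • 1) = ad R (Module.End R M) f := by
  ext g : 1
  simp [(Commute.one_left g).lie_eq]

lemma mapsTo_maxGenEigenspace_of_ad_pow_eq_zero {f g : Module.End R M} {n : ℕ}
    (hg : (ad R (Module.End R M) f ^ n) g = 0) (μ : R) :
    Set.MapsTo g (f.maxGenEigenspace μ) (f.maxGenEigenspace μ) := by
  intro m hm
  rw [SetLike.mem_coe, mem_maxGenEigenspace] at hm ⊢
  obtain ⟨l, hl⟩ := hm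
  refine ⟨n + l, ?_⟩
  rw [pow_apply_eq_sum_ad_pow, ad_sub_smul_one]
  refine sum_eq_zero fun ij hij => ?_
  rw [HasAntidiagonal.mem_antidiagonal] at hij
  rcases le_or_gt n ij.1 with hi | hi
  · rw [pow_map_zero_of_le hi hg, LinearMap.zero_apply, smul_zero]
  · rw [pow_map_zero_of_le (by omega) hl, map_zero, smul_zero]

end AdNilpotent

section Nilpotent

open Module LinearMap

variable {K V : Type*} [Field K] [CharZero K] [AddCommGroup V] [Module K V]
  [FiniteDimensional K V] {X Y : Module.End K V}

lemma eq_zero_of_lie_eq_sq_of_isNilpotent_sub [Nontrivial V] (h : ⁅X, Y⁆ = Y ^ 2) {ν : K}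
    (hY : IsNilpotent (Y - algebraMap K _ ν)) : ν = 0 := by
  have hsq : trace K V (Y ∘ₗ Y) = ν * trace K V Y :=
    trace_comp_eq_mul_of_commute_of_isNilpotent ν (Commute.refl Y) hY
  have htr : trace K V (1 ∘ₗ Y) = ν * trace K V 1 :=
    trace_comp_eq_mul_of_commute_of_isNilpotent ν (Commute.one_left Y) hY
  rw [← mul_eq_comp, ← sq, ← h, trace_lie] at hsq
  rw [← mul_eq_comp, one_mul, trace_one] at htr
  rw [htr, ← mul_assoc, eq_comm, mul_eq_zero] at hsq
  simpa [finrank_pos.ne'] using hsq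

lemma maxGenEigenspace_eq_bot_of_lie_eq_sq (h : ⁅X, Y⁆ = Y ^ 2) {ν : K} (hν : ν ≠ 0) :
    Y.maxGenEigenspace ν = ⊥ := by
  have hX := mapsTo_maxGenEigenspace_of_ad_pow_eq_zero (ad_sq_apply_eq_zero_of_lie_eq_sq h) ν
  have hY := mapsTo_maxGenEigenspace_of_comm (Commute.refl Y) ν
  by_contra hU
  have : Nontrivial (Y.maxGenEigenspace ν) := Submodule.nontrivial_iff_ne_bot.mpr hU
  refine hν (eq_zero_of_lie_eq_sq_of_isNilpotent_sub (X := X.restrict hX) (Y := Y.restrict hY)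
    ?_ ?_)
  · ext u
    exact congr($h u)
  · convert Y.isNilpotent_restrict_maxGenEigenspace_sub_algebraMap ν using 1
    ext
    rfl

lemma isNilpotent_of_lie_eq_sq [IsAlgClosed K] (h : ⁅X, Y⁆ = Y ^ 2) : IsNilpotent Y := by
  have hY : Y.maxGenEigenspace 0 = ⊤ := by
    rw [← Y.iSup_maxGenEigenspace_eq_top, iSup_split_single _ 0]
    refine (sup_eq_left.mpr (iSup₂_le fun ν hν => ?_)).symm
    rw [maxGenEigenspace_eq_bot_of_lie_eq_sq h hν]
    exact bot_le
  refine ((charpoly_nilpotent_tfae Y).out 0 2).mpr fun m => ?_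
  simpa using (hY ▸ Submodule.mem_top : m ∈ Y.maxGenEigenspace 0)

end Nilpotent

end Module.End

lemma iSupIndep.existsUnique_ne_bot_of_indecomposable {R M ι : Type*} [Ring R] [AddCommGroup M]
    [Module R M] [Nontrivial M] {E : ι → Submodule R M} (hind : iSupIndep E)
    (htop : ⨆ i, E i = ⊤) {f g : Module.End R M} (hf : ∀ i, (E i).map f ≤ E i)
    (hg : ∀ i, (E i).map g ≤ E i)
    (hdec : ∀ p q : Submodule R M, p.map f ≤ p → p.map g ≤ p → q.map f ≤ q → q.map g ≤ q →
      IsCompl p q → p = ⊥ ∨ q = ⊥) :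
    ∃! i, E i ≠ ⊥ := by
  have hcompl (i : ι) : IsCompl (E i) (⨆ (j) (_ : j ≠ i), E j) :=
    ⟨hind i, codisjoint_iff.mpr (by rw [← iSup_split_single, htop])⟩
  have hinv (h : Module.End R M) (hh : ∀ i, (E i).map h ≤ E i) (i : ι) :
      (⨆ (j) (_ : j ≠ i), E j).map h ≤ ⨆ (j) (_ : j ≠ i), E j := by
    simpa only [Submodule.map_iSup] using iSup₂_mono fun j _ => hh j
  obtain ⟨i, hi⟩ : ∃ i, E i ≠ ⊥ := by
    by_contra! hE
    simp [hE] at htop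
  refine ⟨i, hi, fun j hj => by_contra fun hji => ?_⟩
  rcases hdec _ _ (hf j) (hg j) (hinv f hf j) (hinv g hg j) (hcompl j) with h | h
  · exact hj h
  · exact hi (eq_bot_iff.mpr (h ▸ le_iSup₂ (f := fun k (_ : k ≠ j) => E k) i (Ne.symm hji)))

open Module.End in
theorem generalized_eigenspace_decomposition {k : Type*} [Field k] [IsAlgClosed k] [CharZero k]
    {V : Type*} [AddCommGroup V] [Module k V] [FiniteDimensional k V]
    (X Y : V →ₗ[k] V) (h : X * Y - Y * X = Y * Y) :
    -- the generalized eigenspaces of X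
    let E : k → Submodule k V :=
      fun μ => LinearMap.ker ((X - μ • 1) ^ Module.finrank k V)
    -- each generalized eigenspace of X is invariant under Y
    (∀ μ : k, (E μ).map Y ≤ E μ) ∧
    -- (each is obviously invariant under X)
    (∀ μ : k, (E μ).map X ≤ E μ) ∧
    -- the module is the direct sum of the generalized eigenspaces (R-submodules)
    iSupIndep E ∧ (⨆ μ : k, E μ) = ⊤ ∧
    -- an indecomposable module has X with a single eigenvalue
    ((Nontrivial V ∧ ∀ p q : Submodule k V, p.map X ≤ p → p.map Y ≤ p →
        q.map X ≤ q → q.map Y ≤ q → IsCompl p q → p = ⊥ ∨ q = ⊥) →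
      ∃! μ : k, E μ ≠ ⊥) := by
  intro E
  have hE : E = maxGenEigenspace X := funext fun μ => by
    rw [maxGenEigenspace_eq_genEigenspace_finrank, genEigenspace_nat]
  have hXY : ⁅X, Y⁆ = Y ^ 2 := by rw [Ring.lie_def, h, sq]
  obtain ⟨n, hn⟩ := isNilpotent_of_lie_eq_sq hXY
  have hY (μ : k) : (E μ).map Y ≤ E μ := Submodule.map_le_iff_le_comap.mpr <| hE ▸
    mapsTo_maxGenEigenspace_of_ad_pow_eq_zero (ad_pow_apply_eq_zero_of_lie_eq_sq hXY hn) μ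
  have hX (μ : k) : (E μ).map X ≤ E μ := Submodule.map_le_iff_le_comap.mpr <| hE ▸
    mapsTo_maxGenEigenspace_of_comm (Commute.refl X) μ
  have hind : iSupIndep E := hE ▸ independent_maxGenEigenspace X
  have htop : ⨆ μ, E μ = ⊤ := hE ▸ iSup_maxGenEigenspace_eq_top X
  exact ⟨hY, hX, hind, htop, fun ⟨_, hdec⟩ =>
    hind.existsUnique_ne_bot_of_indecomposable htop hX hY hdec⟩
end
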